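/- arXiv:2004.08872 — 3 statements merged into one kernel-verified Lean document; each statement's English description precedes it below -/
import Mathlib

section
/- Let n1, n2, n3 be positive integers and A ∈ ℝ^{n1×n2×n3}. Then (F_{n3} ⊗ I_{n1}) · bcirc(A) · (F_{n3}^{-1} ⊗ I_{n2}) = bdiag(Â), i.e. conjugating the block circulant matrix of A by the Kronecker products of the DFT matrix with identity matrices yields the block diagonal matrix whose diagonal blocks are the frontal slices Â^{(1)}, …, Â^{(n3)} of the third-mode DFT of A. -/
open scoped BigOperators Matrix Kronecker ComplexConjugate
open Complex

/-- A third-order tensor of size `n1 × n2 × n3` with entries in `R`. -/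
abbrev T3 (n1 n2 n3 : ℕ) (R : Type*) : Type _ := Fin n1 → Fin n2 → Fin n3 → R

namespace T3

variable {n1 n2 n3 l : ℕ}

/-- The Frobenius inner product `⟨A,B⟩ = Σ_{i,j,k} A_{ijk} B_{ijk}`. -/
def tInner (A B : T3 n1 n2 n3 ℝ) : ℝ := ∑ i, ∑ j, ∑ k, A i j k * B i j k

/-- The Frobenius norm `‖A‖_F = √⟨A,A⟩`. -/
noncomputable def tNorm (A : T3 n1 n2 n3 ℝ) : ℝ := Real.sqrt (tInner A A)

/-- The `n × n` DFT matrix, `(F_n)_{ab} = ω^{ab}` (0-based), `ω = exp(-2πi/n)`. -/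
noncomputable def dftMatrix (n : ℕ) : Matrix (Fin n) (Fin n) ℂ :=
  fun a b => Complex.exp (-(2 * (Real.pi : ℂ) * Complex.I) / (n : ℂ)) ^ ((a : ℕ) * (b : ℕ))

/-- The `k`-th frontal slice `Â^{(k)}` of the DFT of `A` along the third dimension:
`Â(i,j,:) = F_{n3} · A(i,j,:)`. -/
noncomputable def hatSlice (A : T3 n1 n2 n3 ℝ) (k : Fin n3) : Matrix (Fin n1) (Fin n2) ℂ :=
  fun i j => ∑ m : Fin n3, dftMatrix n3 k m * (A i j m : ℂ)

/-- The block circulant matrix of `A`: the `(p,q)` block (0-based) is the frontal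
slice `A^{(p-q mod n3)}`. -/
def bcirc (A : T3 n1 n2 n3 ℝ) : Matrix (Fin n3 × Fin n1) (Fin n3 × Fin n2) ℝ :=
  fun p q => A p.2 q.2 (p.1 - q.1)

/-- The block diagonal matrix with diagonal blocks `Â^{(1)}, …, Â^{(n3)}`. -/
noncomputable def bdiag (A : T3 n1 n2 n3 ℝ) : Matrix (Fin n3 × Fin n1) (Fin n3 × Fin n2) ℂ :=
  fun p q => if p.1 = q.1 then hatSlice A p.1 p.2 q.2 else 0

/-- t-product: `(A*B)^{(k)} = Σ_q A^{(k-q mod n3)} B^{(q)}` (circular convolution of slices). -/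
def tprod (A : T3 n1 n2 n3 ℝ) (B : T3 n2 l n3 ℝ) : T3 n1 l n3 ℝ :=
  fun i j k => ∑ q : Fin n3, ∑ p : Fin n2, A i p (k - q) * B p j q

/-- Tensor transpose: `(Aᵀ)^{(k)} = (A^{(-k mod n3)})ᵀ`. -/
def tT (A : T3 n1 n2 n3 ℝ) : T3 n2 n1 n3 ℝ := fun j i k => A i j (-k)

/-- The identity tensor: first frontal slice the identity matrix, other slices zero. -/
def tI (q m : ℕ) : T3 q q m ℝ := fun i j k => if i = j ∧ (k : ℕ) = 0 then 1 else 0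

/-- An orthogonal tensor: `Qᵀ * Q = Q * Qᵀ = I`. -/
def TOrth {n m : ℕ} (Q : T3 n n m ℝ) : Prop :=
  tprod (tT Q) Q = tI n m ∧ tprod Q (tT Q) = tI n m

/-- A partially orthogonal tensor: `Qᵀ * Q = I`. -/
def PartOrth {n q m : ℕ} (Q : T3 n q m ℝ) : Prop := tprod (tT Q) Q = tI q m

/-- f-diagonal tensor: every frontal slice is a diagonal matrix. -/
def FDiag (S : T3 n1 n2 n3 ℝ) : Prop :=
  ∀ (i : Fin n1) (j : Fin n2) (k : Fin n3), (i : ℕ) ≠ (j : ℕ) → S i j k = 0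

/-- Every Fourier-domain frontal slice of `S` has real, nonnegative, nonincreasing
diagonal entries. -/
def OrderedDiag (S : T3 n1 n2 n3 ℝ) : Prop :=
  ∀ k : Fin n3,
    (∀ (i : Fin n1) (j : Fin n2), (i : ℕ) = (j : ℕ) →
      (hatSlice S k i j).im = 0 ∧ 0 ≤ (hatSlice S k i j).re) ∧
    (∀ (i i' : Fin n1) (j j' : Fin n2), (i : ℕ) = (j : ℕ) → (i' : ℕ) = (j' : ℕ) →
      (i : ℕ) ≤ (i' : ℕ) → (hatSlice S k i' j').re ≤ (hatSlice S k i j).re)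

/-- A t-SVD of `A`: `A = U * S * Vᵀ` with `U, V` orthogonal and `S` f-diagonal. -/
def IsTSVD (A : T3 n1 n2 n3 ℝ) (U : T3 n1 n1 n3 ℝ) (S : T3 n1 n2 n3 ℝ)
    (V : T3 n2 n2 n3 ℝ) : Prop :=
  TOrth U ∧ TOrth V ∧ FDiag S ∧ A = tprod (tprod U S) (tT V)

/-- An ordered t-SVD. -/
def IsOrderedTSVD (A : T3 n1 n2 n3 ℝ) (U : T3 n1 n1 n3 ℝ) (S : T3 n1 n2 n3 ℝ)
    (V : T3 n2 n2 n3 ℝ) : Prop :=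
  IsTSVD A U S V ∧ OrderedDiag S

/-- Lateral slice `U(:,i,:)` as an `n1 × 1 × n3` tensor. -/
def lat (U : T3 n1 n2 n3 ℝ) (i : Fin n2) : T3 n1 1 n3 ℝ := fun a _ k => U a i k

/-- Tube `S(i,j,:)` as a `1 × 1 × n3` tensor. -/
def tube (S : T3 n1 n2 n3 ℝ) (i : Fin n1) (j : Fin n2) : T3 1 1 n3 ℝ := fun _ _ k => S i j k

/-- The rank-one term `U(:,i,:) * S(i,j,:) * V(:,j,:)ᵀ`. -/
def rankOne (U : T3 n1 n1 n3 ℝ) (S : T3 n1 n2 n3 ℝ) (V : T3 n2 n2 n3 ℝ)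
    (i : Fin n1) (j : Fin n2) : T3 n1 n2 n3 ℝ :=
  tprod (tprod (lat U i) (tube S i j)) (tT (lat V j))

/-- The normalized leading rank-one tensor
`M₁ = U(:,1,:) * (S(1,1,:)/‖S(1,1,:)‖_F) * V(:,1,:)ᵀ`. -/
noncomputable def leadM (hn1 : 0 < n1) (hn2 : 0 < n2) (U : T3 n1 n1 n3 ℝ)
    (S : T3 n1 n2 n3 ℝ) (V : T3 n2 n2 n3 ℝ) : T3 n1 n2 n3 ℝ :=
  tprod (tprod (lat U ⟨0, hn1⟩)
      (fun _ _ k => S ⟨0, hn1⟩ ⟨0, hn2⟩ k / tNorm (tube S ⟨0, hn1⟩ ⟨0, hn2⟩)))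
    (tT (lat V ⟨0, hn2⟩))

/-- `‖Y‖_{1,F}`: the maximal Euclidean norm of a column fiber of a frontal slice of `Ŷ`. -/
noncomputable def norm1F (Y : T3 n1 n2 n3 ℝ) : ℝ :=
  ⨆ p : Fin n2 × Fin n3, Real.sqrt (∑ i, ‖hatSlice Y p.2 i p.1‖ ^ 2)

/-- The tubal rank: the maximal rank of a frontal slice of the third-mode DFT. -/
noncomputable def tubalRank (X : T3 n1 n2 n3 ℝ) : ℕ :=
  Finset.univ.sup fun k : Fin n3 => (hatSlice X k).rank

end T3

open T3

/-!
For fixed `(i, j)`, the `(i, j)` entries of the `n3 × n3` blocks of `bcirc A` form the circulant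
matrix of the tube `A(i, j, :)`, and conjugating by `F ⊗ I` acts on each such matrix separately.
The rows of `F` are characters of `ℤ/n`, so `F · circ v = diag (F v) · F`, and by orthogonality of
characters `F · Fᴴ = n • 1`; hence `F · circ v · F⁻¹ = diag (F v)`, whose entries are those of the
slices of `Â`.
-/

namespace Matrix

variable {R : Type*}

def fourierMatrix [Monoid R] (ζ : R) (n : ℕ) : Matrix (Fin n) (Fin n) R :=
  of fun a b => ζ ^ ((a : ℕ) * b)

@[simp]
theorem fourierMatrix_apply [Monoid R] (ζ : R) (n : ℕ) (a b : Fin n) :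
    fourierMatrix ζ n a b = ζ ^ ((a : ℕ) * b) := rfl

theorem fourierMatrix_apply_add [CommMonoid R] {ζ : R} {n : ℕ} (hζ : ζ ^ n = 1)
    (p a b : Fin n) :
    fourierMatrix ζ n p (a + b) = fourierMatrix ζ n p a * fourierMatrix ζ n p b := by
  have hζp : (ζ ^ (p : ℕ)) ^ n = 1 := by rw [← pow_mul, mul_comm, pow_mul, hζ, one_pow]
  simp only [fourierMatrix_apply, pow_mul, Fin.val_add, ← pow_add]
  exact (pow_eq_pow_mod _ hζp).symm

theorem fourierMatrix_mul_circulant [CommSemiring R] {ζ : R} {n : ℕ} [NeZero n]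
    (hζ : ζ ^ n = 1) (v : Fin n → R) :
    fourierMatrix ζ n * circulant v = diagonal (fourierMatrix ζ n *ᵥ v) * fourierMatrix ζ n := by
  ext p q
  rw [mul_apply, diagonal_mul, mulVec, dotProduct, Finset.sum_mul]
  refine Fintype.sum_equiv (Equiv.subRight q) _ _ fun r => ?_
  rw [circulant_apply, Equiv.subRight_apply, mul_right_comm, ← fourierMatrix_apply_add hζ,
    sub_add_cancel]

theorem fourierMatrix_mul_fourierMatrix_inv [Field R] {ζ : R} {n : ℕ}
    (hζ : IsPrimitiveRoot ζ n) :
    fourierMatrix ζ n * fourierMatrix ζ⁻¹ n = (n : R) • (1 : Matrix (Fin n) (Fin n) R) := by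
  ext p q
  have hζ0 : ζ ≠ 0 := hζ.ne_zero (Fin.pos p).ne'
  set x := ζ ^ (p : ℕ) / ζ ^ (q : ℕ) with hx
  have hterm : ∀ t : Fin n, fourierMatrix ζ n p t * fourierMatrix ζ⁻¹ n t q = x ^ (t : ℕ) := by
    intro t
    simp only [fourierMatrix_apply, hx, inv_pow, div_eq_mul_inv]
    ring
  rw [mul_apply, Fintype.sum_congr _ _ hterm, Fin.sum_univ_eq_sum_range (x ^ ·), smul_apply,
    one_apply, smul_eq_mul]
  by_cases hpq : p = q
  · simp [hx, hpq, hζ0]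
  · have hx1 : x ≠ 1 := fun h =>
      hpq (Fin.ext (hζ.pow_inj p.isLt q.isLt ((div_eq_one_iff_eq (pow_ne_zero _ hζ0)).1 h)))
    have hxn : x ^ n = 1 := by
      rw [hx, div_pow, ← pow_mul, ← pow_mul, mul_comm, pow_mul, hζ.pow_eq_one, mul_comm,
        pow_mul, hζ.pow_eq_one, one_pow, one_pow, div_one]
    rw [geom_sum_eq hx1, hxn, sub_self, zero_div, if_neg hpq, mul_zero]

theorem fourierMatrix_mul_circulant_mul_fourierMatrix_inv [Field R] {ζ : R} {n : ℕ} [NeZero n]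
    (hζ : IsPrimitiveRoot ζ n) (v : Fin n → R) :
    fourierMatrix ζ n * circulant v * ((n : R)⁻¹ • fourierMatrix ζ⁻¹ n) =
      diagonal (fourierMatrix ζ n *ᵥ v) := by
  have hn : (n : R) ≠ 0 := hζ.neZero'.out
  rw [fourierMatrix_mul_circulant hζ.pow_eq_one, Matrix.mul_smul, mul_assoc,
    fourierMatrix_mul_fourierMatrix_inv hζ, Matrix.mul_smul, mul_one, smul_smul,
    inv_mul_cancel₀ hn, one_smul]

theorem kronecker_one_mul_mul_kronecker_one_apply {l m m' l' k k' : Type*} [Semiring R]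
    [Fintype m] [Fintype m'] [Fintype k] [Fintype k'] [DecidableEq k] [DecidableEq k']
    (P : Matrix l m R) (M : Matrix (m × k) (m' × k') R) (Q : Matrix m' l' R)
    (p : l) (i : k) (q : l') (j : k') :
    ((P ⊗ₖ (1 : Matrix k k R)) * M * (Q ⊗ₖ (1 : Matrix k' k' R))) (p, i) (q, j) =
      (P * of (fun r s => M (r, i) (s, j)) * Q) p q := by
  simp only [mul_apply, kronecker_apply, one_apply, Fintype.sum_prod_type, of_apply, mul_ite,
    mul_one, mul_zero, ite_mul, zero_mul, Finset.sum_ite_eq, Finset.sum_ite_eq',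
    Finset.mem_univ, if_true]

end Matrix

open Matrix

theorem Complex.isPrimitiveRoot_exp_neg (n : ℕ) (hn : n ≠ 0) :
    IsPrimitiveRoot (exp (-(2 * (Real.pi : ℂ) * I) / n)) n := by
  simpa only [neg_div, exp_neg] using (isPrimitiveRoot_exp n hn).inv

namespace T3

theorem dftMatrix_eq_fourierMatrix (n : ℕ) :
    dftMatrix n = fourierMatrix (exp (-(2 * (Real.pi : ℂ) * I) / n)) n := rfl

theorem conjTranspose_dftMatrix (n : ℕ) :
    (dftMatrix n)ᴴ = fourierMatrix (exp (-(2 * (Real.pi : ℂ) * I) / n))⁻¹ n := by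
  have hconj : conj (exp (-(2 * (Real.pi : ℂ) * I) / n)) =
      (exp (-(2 * (Real.pi : ℂ) * I) / n))⁻¹ := by
    rw [← exp_conj, ← Complex.exp_neg]
    congr 1
    simp only [map_div₀, map_neg, map_mul, map_ofNat, conj_ofReal, conj_I, map_natCast]
    ring
  ext a b
  rw [conjTranspose_apply, dftMatrix_eq_fourierMatrix, fourierMatrix_apply, fourierMatrix_apply,
    star_pow, mul_comm (b : ℕ)]
  exact congrArg (· ^ ((a : ℕ) * b)) hconj

end T3

theorem stmt_0_general (n1 n2 n3 : ℕ) (hn3 : 0 < n3)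
    (A : T3 n1 n2 n3 ℝ) :
    (dftMatrix n3 ⊗ₖ (1 : Matrix (Fin n1) (Fin n1) ℂ)) *
        (bcirc A).map (fun x => (x : ℂ)) *
        ((((n3 : ℂ))⁻¹ • (dftMatrix n3)ᴴ) ⊗ₖ (1 : Matrix (Fin n2) (Fin n2) ℂ)) =
      bdiag A := by
  have : NeZero n3 := ⟨hn3.ne'⟩
  ext ⟨p, i⟩ ⟨q, j⟩
  have hcirc : of (fun r s => (bcirc A).map (fun x => (x : ℂ)) (r, i) (s, j)) =
      circulant fun k => (A i j k : ℂ) := rfl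
  rw [kronecker_one_mul_mul_kronecker_one_apply, hcirc, conjTranspose_dftMatrix,
    dftMatrix_eq_fourierMatrix, fourierMatrix_mul_circulant_mul_fourierMatrix_inv
      (isPrimitiveRoot_exp_neg n3 hn3.ne'), diagonal_apply]
  rfl

/-- `(F_{n3} ⊗ I_{n1}) · bcirc(A) · (F_{n3}⁻¹ ⊗ I_{n2}) = bdiag(Â)`. -/
theorem stmt_0 (n1 n2 n3 : ℕ) (hn1 : 0 < n1) (hn2 : 0 < n2) (hn3 : 0 < n3)
    (A : T3 n1 n2 n3 ℝ) :
    (dftMatrix n3 ⊗ₖ (1 : Matrix (Fin n1) (Fin n1) ℂ)) *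
        (bcirc A).map (fun x => (x : ℂ)) *
        ((((n3 : ℂ))⁻¹ • (dftMatrix n3)ᴴ) ⊗ₖ (1 : Matrix (Fin n2) (Fin n2) ℂ)) =
      bdiag A :=
  stmt_0_general n1 n2 n3 hn3 A
end

section
/- (t-SVD existence) Every tensor A ∈ ℝ^{n1×n2×n3} can be factored as A = U * S * V^T, where U ∈ ℝ^{n1×n1×n3} and V ∈ ℝ^{n2×n2×n3} are orthogonal tensors and S ∈ ℝ^{n1×n2×n3} is f-diagonal; moreover the factorization can be chosen ordered, i.e. so that for each k the Fourier-domain frontal slice Ŝ^{(k)} is diagonal with real, nonnegative, nonincreasing diagonal entries. -/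
open scoped BigOperators Matrix Kronecker ComplexConjugate
open Complex

open T3

/-!
The DFT along the third mode is injective on real tensors, turns the t-product into the
slicewise matrix product and the tensor transpose into the slicewise conjugate transpose. So a
t-SVD is obtained by taking a sorted SVD `Â⁽ᵏ⁾ = Uₖ Σₖ Vₖᴴ` of every Fourier slice and
transforming the factors back. The only subtlety is that the factors must again be DFTs of real
tensors, i.e. conjugate-symmetric in `k`: since `Â⁽⁻ᵏ⁾` is the conjugate of `Â⁽ᵏ⁾`, one chooses
the SVD freely for one slice of each pair `{k, -k}`, conjugates it for the other, and takes a real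
SVD of the real slices with `k = -k`.
-/

section DFT

open Finset Matrix Fin.CommRing

variable {n : ℕ} [NeZero n]

lemma isPrimitiveRoot_exp_neg_two_pi_I_div :
    IsPrimitiveRoot (Complex.exp (-(2 * (Real.pi : ℂ) * Complex.I) / (n : ℂ))) n := by
  rw [neg_div, Complex.exp_neg]
  exact (Complex.isPrimitiveRoot_exp n (NeZero.ne n)).inv

noncomputable def dftChar (n : ℕ) [NeZero n] : AddChar (Fin n) ℂ where
  toFun a := Complex.exp (-(2 * (Real.pi : ℂ) * Complex.I) / (n : ℂ)) ^ (a : ℕ)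
  map_zero_eq_one' := by simp
  map_add_eq_mul' a b := by
    rw [Fin.val_add, ← pow_eq_pow_mod _ isPrimitiveRoot_exp_neg_two_pi_I_div.pow_eq_one, pow_add]

lemma dftChar_isPrimitive : (dftChar n).IsPrimitive := by
  intro a ha h
  have h1 := DFunLike.congr_fun h 1
  rw [AddChar.mulShift_apply, mul_one, AddChar.one_apply] at h1
  have hdvd := (isPrimitiveRoot_exp_neg_two_pi_I_div.pow_eq_one_iff_dvd _).mp h1
  exact ha (Fin.ext (Nat.eq_zero_of_dvd_of_lt hdvd a.isLt))

lemma dftMatrix_apply (k m : Fin n) : dftMatrix n k m = dftChar n (k * m) := by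
  change _ = Complex.exp _ ^ ((k * m : Fin n) : ℕ)
  rw [Fin.val_mul, ← pow_eq_pow_mod _ isPrimitiveRoot_exp_neg_two_pi_I_div.pow_eq_one]
  rfl

lemma dftMatrix_add_right (k m q : Fin n) :
    dftMatrix n k (m + q) = dftMatrix n k m * dftMatrix n k q := by
  simp only [dftMatrix_apply, mul_add, AddChar.map_add_eq_mul]

lemma dftMatrix_zero_right (k : Fin n) : dftMatrix n k 0 = 1 := by
  simp [dftMatrix_apply]

lemma dftMatrix_neg_right (k m : Fin n) : dftMatrix n k (-m) = conj (dftMatrix n k m) := by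
  simp only [dftMatrix_apply, mul_neg, AddChar.map_neg_eq_conj]

lemma dftMatrix_neg_left (k m : Fin n) : dftMatrix n (-k) m = conj (dftMatrix n k m) := by
  simp only [dftMatrix_apply, neg_mul, AddChar.map_neg_eq_conj]

lemma sum_dftMatrix_mul_conj (k k' : Fin n) :
    ∑ m, dftMatrix n k m * conj (dftMatrix n k' m) = if k = k' then (n : ℂ) else 0 := by
  have key : ∀ m, dftMatrix n k m * conj (dftMatrix n k' m) = dftChar n (m * (k - k')) := by
    intro m
    rw [← dftMatrix_neg_left, dftMatrix_apply, dftMatrix_apply, ← AddChar.map_add_eq_mul]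
    ring_nf
  simp only [key, AddChar.sum_mulShift _ dftChar_isPrimitive, sub_eq_zero, Fintype.card_fin,
    Nat.cast_ite, Nat.cast_zero]

lemma dftMatrix_mul_conjTranspose : dftMatrix n * (dftMatrix n)ᴴ = (n : ℂ) • 1 := by
  ext k k'
  simp [mul_apply, sum_dftMatrix_mul_conj, one_apply]

lemma conjTranspose_dftMatrix_mul : (dftMatrix n)ᴴ * dftMatrix n = (n : ℂ) • 1 := by
  ext m m'
  have hsymm : ∀ a b : Fin n, dftMatrix n a b = dftMatrix n b a := fun a b => by
    simp only [dftMatrix_apply, mul_comm]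
  simp only [mul_apply, conjTranspose_apply, RCLike.star_def, hsymm _ m', hsymm _ m, mul_comm,
    sum_dftMatrix_mul_conj]
  simp [one_apply, eq_comm]

lemma sum_dftMatrix_mul_sub (k q : Fin n) (a : Fin n → ℂ) :
    ∑ m, dftMatrix n k m * a (m - q) = dftMatrix n k q * ∑ m, dftMatrix n k m * a m := by
  rw [← Equiv.sum_comp (Equiv.addRight q), Finset.mul_sum]
  simp only [Equiv.coe_addRight, add_sub_cancel_right, dftMatrix_add_right]
  exact Finset.sum_congr rfl fun m _ => by ring

lemma conjTranspose_dftMatrix_mulVec_mulVec (x : Fin n → ℂ) :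
    (dftMatrix n)ᴴ *ᵥ (dftMatrix n *ᵥ x) = (n : ℂ) • x := by
  rw [mulVec_mulVec, conjTranspose_dftMatrix_mul, smul_mulVec, one_mulVec]

lemma dftMatrix_mulVec_injective : Function.Injective (dftMatrix n *ᵥ ·) := by
  intro x y h
  have h' := congrArg ((dftMatrix n)ᴴ *ᵥ ·) h
  simp only [conjTranspose_dftMatrix_mulVec_mulVec] at h'
  exact smul_right_injective _ (Nat.cast_ne_zero.mpr (NeZero.ne n)) h'

lemma exists_real_dftMatrix_mulVec_eq (g : Fin n → ℂ) (hg : ∀ k, g (-k) = conj (g k)) :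
    ∃ x : Fin n → ℝ, dftMatrix n *ᵥ (fun m => (x m : ℂ)) = g := by
  set y := (n : ℂ)⁻¹ • ((dftMatrix n)ᴴ *ᵥ g)
  have hy : ∀ m, conj (y m) = y m := by
    intro m
    simp only [y, Pi.smul_apply, smul_eq_mul, mulVec, dotProduct, conjTranspose_apply,
      RCLike.star_def, map_mul, map_sum, map_inv₀, map_natCast, Complex.conj_conj]
    congr 1
    rw [← Equiv.sum_comp (Equiv.neg (Fin n))]
    simp only [Equiv.neg_apply, dftMatrix_neg_left, hg, Complex.conj_conj, mul_comm]
  refine ⟨fun m => (y m).re, ?_⟩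
  have hre : (fun m => ((y m).re : ℂ)) = y := funext fun m => Complex.conj_eq_iff_re.mp (hy m)
  rw [hre, mulVec_smul, mulVec_mulVec, dftMatrix_mul_conjTranspose, smul_mulVec, one_mulVec,
    smul_smul, inv_mul_cancel₀ (Nat.cast_ne_zero.mpr (NeZero.ne n)), one_smul]

end DFT

namespace LinearMap

open Module

variable {𝕜 : Type*} [RCLike 𝕜]
  {E : Type*} [NormedAddCommGroup E] [InnerProductSpace 𝕜 E] [FiniteDimensional 𝕜 E]
  {F : Type*} [NormedAddCommGroup F] [InnerProductSpace 𝕜 F] [FiniteDimensional 𝕜 F]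
  (T : E →ₗ[𝕜] F) {m n : ℕ}

/-- An orthonormal eigenbasis of `T† T`, ordered by decreasing eigenvalue (see
`LinearMap.IsSymmetric.eigenvalues_antitone`). -/
noncomputable def rightSingularBasis (hn : finrank 𝕜 E = n) : OrthonormalBasis (Fin n) 𝕜 E :=
  T.isSymmetric_adjoint_comp_self.eigenvectorBasis hn

lemma inner_apply_rightSingularBasis (hn : finrank 𝕜 E = n) (i j : Fin n) :
    inner 𝕜 (T (T.rightSingularBasis hn i)) (T (T.rightSingularBasis hn j)) =
      if i = j then ((T.singularValues i ^ 2 : ℝ) : 𝕜) else 0 := by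
  rw [← adjoint_inner_right, ← comp_apply, rightSingularBasis,
    T.isSymmetric_adjoint_comp_self.apply_eigenvectorBasis, inner_smul_right,
    orthonormal_iff_ite.mp (OrthonormalBasis.orthonormal _), T.sq_singularValues_fin hn]
  split_ifs with h <;> simp [h]

lemma apply_rightSingularBasis_eq_zero (hn : finrank 𝕜 E = n) {j : Fin n}
    (hj : T.singularValues j = 0) : T (T.rightSingularBasis hn j) = 0 := by
  rw [← inner_self_eq_zero (𝕜 := 𝕜), inner_apply_rightSingularBasis, if_pos rfl, hj]
  simp

lemma lt_finrank_of_singularValues_pos {i : ℕ} (hi : 0 < T.singularValues i) :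
    i < finrank 𝕜 F :=
  (T.singularValues_pos_iff_lt_finrank_range.mp hi).trans_le (Submodule.finrank_le _)

lemma lt_finrank_domain_of_singularValues_pos {i : ℕ} (hi : 0 < T.singularValues i) :
    i < finrank 𝕜 E :=
  (T.singularValues_pos_iff_lt_finrank_range.mp hi).trans_le (finrank_range_le T)

theorem exists_orthonormalBasis_apply_rightSingularBasis (hn : finrank 𝕜 E = n)
    (hm : finrank 𝕜 F = m) :
    ∃ c : OrthonormalBasis (Fin m) 𝕜 F, ∀ j : Fin n, T (T.rightSingularBasis hn j) =
      if h : (j : ℕ) < m then (T.singularValues j : 𝕜) • c ⟨j, h⟩ else 0 := by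
  -- the images `σᵢ⁻¹ • T bᵢ` with `σᵢ > 0` are orthonormal; `c` extends them to a basis
  let v : Fin m → F := fun i =>
    if h : (i : ℕ) < n then ((T.singularValues i)⁻¹ : 𝕜) • T (T.rightSingularBasis hn ⟨i, h⟩)
    else 0
  have hv : Orthonormal 𝕜 ({i : Fin m | 0 < T.singularValues i}.domRestrict v) := by
    rw [orthonormal_iff_ite]
    rintro ⟨i, hi⟩ ⟨i', hi'⟩
    have hin : (i : ℕ) < n := hn ▸ T.lt_finrank_domain_of_singularValues_pos hi
    have hin' : (i' : ℕ) < n := hn ▸ T.lt_finrank_domain_of_singularValues_pos hi'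
    simp only [Set.domRestrict_apply, v, dif_pos hin, dif_pos hin', inner_smul_left,
      inner_smul_right, inner_apply_rightSingularBasis, Fin.mk.injEq, Fin.val_inj,
      Subtype.mk.injEq]
    split_ifs with h
    · subst h
      have : (T.singularValues i : 𝕜) ≠ 0 := RCLike.ofReal_ne_zero.mpr hi.ne'
      simp only [map_inv₀, RCLike.conj_ofReal, RCLike.ofReal_pow]
      field_simp
    · simp
  obtain ⟨c, hc⟩ := hv.exists_orthonormalBasis_extension_of_card_eq (by simp [hm])
  refine ⟨c, fun j => ?_⟩
  rcases (T.singularValues_nonneg j).eq_or_lt with hj | hj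
  · rw [T.apply_rightSingularBasis_eq_zero hn hj.symm, ← hj]
    simp
  · have hjm : (j : ℕ) < m := hm ▸ T.lt_finrank_of_singularValues_pos hj
    have : (T.singularValues j : 𝕜) ≠ 0 := RCLike.ofReal_ne_zero.mpr hj.ne'
    rw [dif_pos hjm, hc ⟨j, hjm⟩ hj]
    simp only [v, dif_pos j.isLt, smul_smul, mul_inv_cancel₀ this, one_smul]

end LinearMap

section MatrixSVD

open Matrix

/-- The diagonal is indexed by `ℕ`, as for `LinearMap.singularValues`, rather than by
`Fin (min m n)`. -/
def rectDiag {α : Type*} [Zero α] (m n : ℕ) (d : ℕ → α) : Matrix (Fin m) (Fin n) α :=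
  of fun i j => if (i : ℕ) = j then d i else 0

lemma rectDiag_map {α β : Type*} [Zero α] [Zero β] {m n : ℕ} (d : ℕ → α) (f : α → β)
    (hf : f 0 = 0) : (rectDiag m n d).map f = rectDiag m n (f ∘ d) := by
  ext i j
  simp only [rectDiag, map_apply, of_apply, Function.comp_apply]
  split_ifs <;> simp [hf]

lemma mul_rectDiag_apply {α : Type*} [NonUnitalNonAssocSemiring α] {l m n : ℕ}
    (A : Matrix (Fin l) (Fin m) α) (d : ℕ → α) (a : Fin l) (j : Fin n) :
    (A * rectDiag m n d) a j = if h : (j : ℕ) < m then A a ⟨j, h⟩ * d j else 0 := by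
  simp only [mul_apply, rectDiag, of_apply, mul_ite, mul_zero]
  split_ifs with h
  · rw [Finset.sum_eq_single ⟨j, h⟩ (fun i _ hi => if_neg fun hij => hi (Fin.ext hij))
      (by simp), if_pos rfl]
  · exact Finset.sum_eq_zero fun i _ => if_neg fun hij : (i : ℕ) = j => h (hij ▸ i.isLt)

variable {𝕜 𝕜' : Type*} [RCLike 𝕜] [RCLike 𝕜'] {m n : ℕ}

structure IsOrderedSVD (M : Matrix (Fin m) (Fin n) 𝕜) (U : Matrix (Fin m) (Fin m) 𝕜)
    (σ : ℕ → ℝ) (V : Matrix (Fin n) (Fin n) 𝕜) : Prop where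
  left_mem_unitaryGroup : U ∈ unitaryGroup (Fin m) 𝕜
  right_mem_unitaryGroup : V ∈ unitaryGroup (Fin n) 𝕜
  nonneg : ∀ i, 0 ≤ σ i
  antitone : Antitone σ
  eq_mul_mul : M = U * rectDiag m n (fun i => (σ i : 𝕜)) * Vᴴ

theorem exists_isOrderedSVD (M : Matrix (Fin m) (Fin n) 𝕜) :
    ∃ U σ V, IsOrderedSVD M U σ V := by
  set T := toEuclideanLin M
  have hn := finrank_euclideanSpace_fin (𝕜 := 𝕜) (n := n)
  obtain ⟨c, hc⟩ := T.exists_orthonormalBasis_apply_rightSingularBasis hn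
    (finrank_euclideanSpace_fin (𝕜 := 𝕜) (n := m))
  set U := (EuclideanSpace.basisFun (Fin m) 𝕜).toBasis.toMatrix c
  set V := (EuclideanSpace.basisFun (Fin n) 𝕜).toBasis.toMatrix (T.rightSingularBasis hn)
  have hMV : M * V = U * rectDiag m n (fun i => (T.singularValues i : 𝕜)) := by
    ext a j
    rw [mul_rectDiag_apply]
    change T (T.rightSingularBasis hn j) a = _
    rw [hc j]
    split_ifs
    · exact mul_comm _ _
    · rfl
  refine ⟨U, T.singularValues, V, ⟨?_, ?_, T.singularValues_nonneg, T.singularValues_antitone, ?_⟩⟩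
  · exact (EuclideanSpace.basisFun _ 𝕜).toMatrix_orthonormalBasis_mem_unitary c
  · exact (EuclideanSpace.basisFun _ 𝕜).toMatrix_orthonormalBasis_mem_unitary _
  · rw [← hMV, Matrix.mul_assoc, OrthonormalBasis.toMatrix_orthonormalBasis_self_mul_conjTranspose,
      Matrix.mul_one]

lemma map_mem_unitaryGroup {U : Matrix (Fin n) (Fin n) 𝕜} (hU : U ∈ unitaryGroup (Fin n) 𝕜)
    (f : 𝕜 →+* 𝕜') (hf : ∀ x, f (star x) = star (f x)) :
    U.map f ∈ unitaryGroup (Fin n) 𝕜' := by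
  rw [mem_unitaryGroup_iff, star_eq_conjTranspose, ← conjTranspose_map f hf, ← Matrix.map_mul,
    ← star_eq_conjTranspose, mem_unitaryGroup_iff.mp hU, Matrix.map_one f f.map_zero f.map_one]

lemma IsOrderedSVD.map {M : Matrix (Fin m) (Fin n) 𝕜} {U : Matrix (Fin m) (Fin m) 𝕜} {σ : ℕ → ℝ}
    {V : Matrix (Fin n) (Fin n) 𝕜} (h : IsOrderedSVD M U σ V) (f : 𝕜 →+* 𝕜')
    (hf_star : ∀ x, f (star x) = star (f x)) (hf_real : ∀ r : ℝ, f r = r) :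
    IsOrderedSVD (M.map f) (U.map f) σ (V.map f) where
  left_mem_unitaryGroup := map_mem_unitaryGroup h.left_mem_unitaryGroup f hf_star
  right_mem_unitaryGroup := map_mem_unitaryGroup h.right_mem_unitaryGroup f hf_star
  nonneg := h.nonneg
  antitone := h.antitone
  eq_mul_mul := by
    rw [h.eq_mul_mul, Matrix.map_mul, Matrix.map_mul, rectDiag_map _ f f.map_zero,
      conjTranspose_map f hf_star]
    simp only [Function.comp_def, hf_real]

theorem exists_isOrderedSVD_of_map_conj_eq {M : Matrix (Fin m) (Fin n) 𝕜}
    (hM : M.map conj = M) :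
    ∃ U σ V, IsOrderedSVD M U σ V ∧ U.map conj = U ∧ V.map conj = V := by
  obtain ⟨U, σ, V, h⟩ := exists_isOrderedSVD (M.map RCLike.re)
  have hreal : ∀ {p q : ℕ} (X : Matrix (Fin p) (Fin q) ℝ),
      (X.map (algebraMap ℝ 𝕜)).map conj = X.map (algebraMap ℝ 𝕜) := fun X => by
    ext; simp
  have hM' : (M.map RCLike.re).map (algebraMap ℝ 𝕜) = M := by
    ext i j
    simpa using RCLike.conj_eq_iff_re.mp (congrFun (congrFun hM i) j)
  refine ⟨_, σ, _, hM' ▸ h.map (algebraMap ℝ 𝕜) (fun x => by simp) (fun r => by simp),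
    hreal U, hreal V⟩

end MatrixSVD

section Symmetrize

variable {ι β : Type*} [LinearOrder ι]

def symmetrize (τ : ι → ι) (c : β → β) (x : ι → β) (k : ι) : β :=
  if k ≤ τ k then x k else c (x (τ k))

variable {τ : ι → ι} {c : β → β} {x : ι → β}

lemma symmetrize_of_le {k : ι} (hk : k ≤ τ k) : symmetrize τ c x k = x k := if_pos hk

lemma symmetrize_of_lt {k : ι} (hk : τ k < k) : symmetrize τ c x k = c (x (τ k)) :=
  if_neg hk.not_ge

lemma symmetrize_apply (hτ : Function.Involutive τ) (hc : Function.Involutive c)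
    (hx : ∀ k, τ k = k → c (x k) = x k) (k : ι) :
    symmetrize τ c x (τ k) = c (symmetrize τ c x k) := by
  rcases lt_trichotomy k (τ k) with hk | hk | hk
  · rw [symmetrize_of_lt (by rwa [hτ k]), hτ k, symmetrize_of_le hk.le]
  · rw [← hk, symmetrize_of_le hk.le, hx k hk.symm]
  · rw [symmetrize_of_le (by rw [hτ k]; exact hk.le), symmetrize_of_lt hk, hc]

end Symmetrize

section SVDFamily

open Matrix

variable {𝕜 : Type*} [RCLike 𝕜] {m n : ℕ}

lemma map_conj_involutive {p q : ℕ} :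
    Function.Involutive fun X : Matrix (Fin p) (Fin q) 𝕜 => X.map conj := fun X => by
  ext; simp

lemma IsOrderedSVD.map_conj {M : Matrix (Fin m) (Fin n) 𝕜} {U : Matrix (Fin m) (Fin m) 𝕜}
    {σ : ℕ → ℝ} {V : Matrix (Fin n) (Fin n) 𝕜} (h : IsOrderedSVD M U σ V) :
    IsOrderedSVD (M.map conj) (U.map conj) σ (V.map conj) :=
  h.map _ (fun _ => rfl) RCLike.conj_ofReal

theorem exists_isOrderedSVD_family {ι : Type*} [LinearOrder ι] {τ : ι → ι}
    (hτ : Function.Involutive τ) (M : ι → Matrix (Fin m) (Fin n) 𝕜)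
    (hM : ∀ k, M (τ k) = (M k).map conj) :
    ∃ (U : ι → Matrix (Fin m) (Fin m) 𝕜) (σ : ι → ℕ → ℝ) (V : ι → Matrix (Fin n) (Fin n) 𝕜),
      ∀ k, IsOrderedSVD (M k) (U k) (σ k) (V k) ∧
      U (τ k) = (U k).map conj ∧ σ (τ k) = σ k ∧ V (τ k) = (V k).map conj := by
  have hsvd : ∀ k, ∃ U σ V, IsOrderedSVD (M k) U σ V ∧
      (τ k = k → U.map conj = U ∧ V.map conj = V) := by
    intro k
    by_cases hk : τ k = k
    · obtain ⟨U, σ, V, h, hU, hV⟩ :=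
        exists_isOrderedSVD_of_map_conj_eq ((hM k).symm.trans (congrArg M hk))
      exact ⟨U, σ, V, h, fun _ => ⟨hU, hV⟩⟩
    · obtain ⟨U, σ, V, h⟩ := exists_isOrderedSVD (M k)
      exact ⟨U, σ, V, h, fun h => absurd h hk⟩
  choose U σ V hUσV hreal using hsvd
  refine ⟨symmetrize τ (·.map conj) U, symmetrize τ id σ, symmetrize τ (·.map conj) V,
    fun k => ⟨?_, symmetrize_apply hτ map_conj_involutive (fun k hk => (hreal k hk).1) k,
      symmetrize_apply (c := id) (x := σ) hτ (fun _ => rfl) (fun _ _ => rfl) k,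
      symmetrize_apply hτ map_conj_involutive (fun k hk => (hreal k hk).2) k⟩⟩
  rcases le_or_gt k (τ k) with hk | hk
  · simpa only [symmetrize_of_le hk] using hUσV k
  · simpa only [symmetrize_of_lt hk, id, ← hM, hτ k] using (hUσV (τ k)).map_conj

end SVDFamily

namespace T3

open Finset Matrix

variable {n1 n2 n3 l : ℕ}

lemma hatSlice_apply_eq_mulVec (A : T3 n1 n2 n3 ℝ) (k : Fin n3) (i : Fin n1) (j : Fin n2) :
    hatSlice A k i j = (dftMatrix n3 *ᵥ fun m => (A i j m : ℂ)) k :=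
  rfl

lemma isOrderedTSVD_of_fin_zero (A : T3 n1 n2 0 ℝ) (U : T3 n1 n1 0 ℝ) (S : T3 n1 n2 0 ℝ)
    (V : T3 n2 n2 0 ℝ) : IsOrderedTSVD A U S V :=
  ⟨⟨⟨Subsingleton.elim _ _, Subsingleton.elim _ _⟩, ⟨Subsingleton.elim _ _, Subsingleton.elim _ _⟩,
    fun _ _ k => k.elim0, Subsingleton.elim _ _⟩, fun k => k.elim0⟩

lemma orderedDiag_of_hatSlice_eq_rectDiag {S : T3 n1 n2 n3 ℝ} {σ : Fin n3 → ℕ → ℝ}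
    (hS : ∀ k, hatSlice S k = rectDiag n1 n2 fun t => (σ k t : ℂ)) (hnonneg : ∀ k t, 0 ≤ σ k t)
    (hanti : ∀ k, Antitone (σ k)) : OrderedDiag S := by
  intro k
  have hdiag : ∀ (i : Fin n1) (j : Fin n2), (i : ℕ) = j → hatSlice S k i j = σ k i := by
    intro i j hij
    rw [hS k]
    exact if_pos hij
  refine ⟨fun i j hij => ?_, fun i i' j j' hij hij' hii' => ?_⟩
  · rw [hdiag i j hij, Complex.ofReal_im, Complex.ofReal_re]
    exact ⟨rfl, hnonneg k i⟩
  · rw [hdiag i j hij, hdiag i' j' hij', Complex.ofReal_re, Complex.ofReal_re]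
    exact hanti k hii'

variable [NeZero n3]

lemma eq_of_hatSlice_eq {A B : T3 n1 n2 n3 ℝ} (h : ∀ k, hatSlice A k = hatSlice B k) : A = B := by
  funext i j m
  have hij : (dftMatrix n3 *ᵥ fun m => (A i j m : ℂ)) = dftMatrix n3 *ᵥ fun m => (B i j m : ℂ) :=
    funext fun k => by simp only [← hatSlice_apply_eq_mulVec, h]
  exact_mod_cast congrFun (dftMatrix_mulVec_injective hij) m

lemma apply_eq_zero_of_hatSlice_apply_eq_zero {A : T3 n1 n2 n3 ℝ} {i : Fin n1} {j : Fin n2}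
    (h : ∀ k, hatSlice A k i j = 0) (m : Fin n3) : A i j m = 0 := by
  have hij : (dftMatrix n3 *ᵥ fun m => (A i j m : ℂ)) = dftMatrix n3 *ᵥ 0 :=
    funext fun k => by rw [← hatSlice_apply_eq_mulVec, h, mulVec_zero, Pi.zero_apply]
  simpa using congrFun (dftMatrix_mulVec_injective hij) m

lemma exists_hatSlice_eq {p q : ℕ} (G : Fin n3 → Matrix (Fin p) (Fin q) ℂ)
    (hG : ∀ k, G (-k) = (G k).map conj) : ∃ X : T3 p q n3 ℝ, ∀ k, hatSlice X k = G k := by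
  choose X hX using fun i j =>
    exists_real_dftMatrix_mulVec_eq (fun k => G k i j) (fun k => by rw [hG]; rfl)
  exact ⟨X, fun k => Matrix.ext fun i j => congrFun (hX i j) k⟩

lemma hatSlice_neg (A : T3 n1 n2 n3 ℝ) (k : Fin n3) :
    hatSlice A (-k) = (hatSlice A k).map conj := by
  ext i j
  simp [hatSlice, dftMatrix_neg_left]

lemma hatSlice_tprod (A : T3 n1 n2 n3 ℝ) (B : T3 n2 l n3 ℝ) (k : Fin n3) :
    hatSlice (tprod A B) k = hatSlice A k * hatSlice B k := by
  ext i j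
  have hshift : ∀ p q, ∑ m, dftMatrix n3 k m * (A i p (m - q) : ℂ) =
      dftMatrix n3 k q * hatSlice A k i p := fun p q =>
    sum_dftMatrix_mul_sub k q fun m => (A i p m : ℂ)
  calc hatSlice (tprod A B) k i j
      = ∑ p, ∑ q, (∑ m, dftMatrix n3 k m * (A i p (m - q) : ℂ)) * (B p j q : ℂ) := by
        simp only [hatSlice, tprod, Complex.ofReal_sum, Complex.ofReal_mul, mul_sum, sum_mul,
          mul_assoc]
        rw [sum_comm]
        refine (sum_congr rfl fun q _ => sum_comm).trans ?_
        rw [sum_comm]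
    _ = (hatSlice A k * hatSlice B k) i j := by
        rw [Matrix.mul_apply]
        refine sum_congr rfl fun p _ => ?_
        rw [show hatSlice B k p j = ∑ q, dftMatrix n3 k q * (B p j q : ℂ) from rfl, mul_sum]
        exact sum_congr rfl fun q _ => by rw [hshift]; ring

lemma hatSlice_tT (A : T3 n1 n2 n3 ℝ) (k : Fin n3) : hatSlice (tT A) k = (hatSlice A k)ᴴ := by
  ext j i
  rw [conjTranspose_apply, RCLike.star_def, hatSlice, hatSlice, ← Equiv.sum_comp (Equiv.neg _)]
  simp [tT, dftMatrix_neg_right]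

lemma hatSlice_tI (k : Fin n3) : hatSlice (tI n1 n3) k = 1 := by
  ext i j
  rw [hatSlice, sum_eq_single 0 (fun m _ hm => by simp [tI, Fin.val_eq_zero_iff, hm]) (by simp)]
  by_cases hij : i = j <;> simp [tI, hij, dftMatrix_zero_right, one_apply]

lemma tOrth_of_hatSlice_mem_unitaryGroup {n : ℕ} {Q : T3 n n n3 ℝ}
    (hQ : ∀ k, hatSlice Q k ∈ unitaryGroup (Fin n) ℂ) : TOrth Q := by
  constructor <;> refine eq_of_hatSlice_eq fun k => ?_ <;>
    rw [hatSlice_tprod, hatSlice_tT, hatSlice_tI, ← star_eq_conjTranspose]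
  exacts [mem_unitaryGroup_iff'.mp (hQ k), mem_unitaryGroup_iff.mp (hQ k)]

lemma fDiag_of_hatSlice_eq_rectDiag {S : T3 n1 n2 n3 ℝ} {d : Fin n3 → ℕ → ℂ}
    (hS : ∀ k, hatSlice S k = rectDiag n1 n2 (d k)) : FDiag S := fun _ _ m hij =>
  apply_eq_zero_of_hatSlice_apply_eq_zero (fun k => by rw [hS k]; exact if_neg hij) m

lemma eq_tprod_tprod_tT_of_hatSlice {A : T3 n1 n2 n3 ℝ} {U : T3 n1 n1 n3 ℝ} {S : T3 n1 n2 n3 ℝ}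
    {V : T3 n2 n2 n3 ℝ} (h : ∀ k, hatSlice A k = hatSlice U k * hatSlice S k * (hatSlice V k)ᴴ) :
    A = tprod (tprod U S) (tT V) :=
  eq_of_hatSlice_eq fun k => by rw [hatSlice_tprod, hatSlice_tprod, hatSlice_tT, h]

end T3

/-- t-SVD existence: every `A ∈ ℝ^{n1×n2×n3}` has an ordered t-SVD
`A = U * S * Vᵀ` with `U, V` orthogonal and `S` f-diagonal. -/
theorem stmt_4 (n1 n2 n3 : ℕ) (A : T3 n1 n2 n3 ℝ) :
    ∃ (U : T3 n1 n1 n3 ℝ) (S : T3 n1 n2 n3 ℝ) (V : T3 n2 n2 n3 ℝ),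
      IsOrderedTSVD A U S V := by
  rcases n3.eq_zero_or_pos with rfl | hn
  · exact ⟨0, 0, 0, isOrderedTSVD_of_fin_zero A 0 0 0⟩
  have : NeZero n3 := ⟨hn.ne'⟩
  obtain ⟨U', σ, V', hsvd⟩ :=
    exists_isOrderedSVD_family neg_involutive (hatSlice A) (hatSlice_neg A)
  obtain ⟨U, hU⟩ := exists_hatSlice_eq U' fun k => (hsvd k).2.1
  obtain ⟨S, hS⟩ := exists_hatSlice_eq (fun k => rectDiag n1 n2 fun t => (σ k t : ℂ)) fun k => by
    rw [rectDiag_map _ _ (map_zero _), (hsvd k).2.2.1]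
    simp [Function.comp_def]
  obtain ⟨V, hV⟩ := exists_hatSlice_eq V' fun k => (hsvd k).2.2.2
  refine ⟨U, S, V, ⟨?_, ?_, fDiag_of_hatSlice_eq_rectDiag hS, ?_⟩,
    orderedDiag_of_hatSlice_eq_rectDiag hS (fun k => (hsvd k).1.nonneg)
      fun k => (hsvd k).1.antitone⟩
  · exact tOrth_of_hatSlice_mem_unitaryGroup fun k => hU k ▸ (hsvd k).1.left_mem_unitaryGroup
  · exact tOrth_of_hatSlice_mem_unitaryGroup fun k => hV k ▸ (hsvd k).1.right_mem_unitaryGroup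
  · exact eq_tprod_tprod_tT_of_hatSlice fun k => by rw [hU, hS, hV]; exact (hsvd k).1.eq_mul_mul
end

section
/- Let A = U * S * V^T be a t-SVD of A ∈ ℝ^{n1×n2×n3} and for each i set T_i = U(:,i,:) * S(i,i,:) * V(:,i,:)^T. Then the tensors T_i are pairwise orthogonal in the Frobenius inner product, ⟨T_i, T_j⟩ = 0 for i ≠ j, and ‖T_i‖_F = ‖S(i,i,:)‖_F for every i; in particular, whenever S(i,i,:) ≠ 0, the normalized tensor U(:,i,:) * (S(i,i,:)/‖S(i,i,:)‖_F) * V(:,i,:)^T has Frobenius norm one. -/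
open scoped BigOperators Matrix Kronecker ComplexConjugate
open Complex

open T3

/-!
Under the block-circulant embedding `bcirc`, the t-product becomes matrix multiplication, the
tensor transpose becomes the matrix transpose, and `n3 ⟨A, B⟩ = tr (bcirc Aᵀ * bcirc B)`.
If `Uᵀ * U = I`, the lateral slices of `U` have block-circulant Gram matrices `δᵢⱼ • 1`, so
cycling the trace turns `⟨uᵢ * f * vᵢ'ᵀ, uⱼ * g * vⱼ'ᵀ⟩` into `δᵢⱼ δᵢ'ⱼ' ⟨f, g⟩`.
-/

lemma Matrix.trace_transpose_mul_sandwich {ι₁ ι₂ κ₁ κ₂ μ ν R : Type*}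
    [Fintype ι₁] [Fintype ι₂] [Fintype κ₁] [Fintype κ₂] [Fintype μ] [Fintype ν] [CommRing R]
    (A₁ : Matrix μ ι₁ R) (B₁ : Matrix ι₁ κ₁ R) (C₁ : Matrix ν κ₁ R)
    (A₂ : Matrix μ ι₂ R) (B₂ : Matrix ι₂ κ₂ R) (C₂ : Matrix ν κ₂ R) :
    ((A₁ * B₁ * C₁ᵀ)ᵀ * (A₂ * B₂ * C₂ᵀ)).trace =
      (B₁ᵀ * (A₁ᵀ * A₂) * B₂ * (C₂ᵀ * C₁)).trace := by
  simp only [Matrix.transpose_mul, Matrix.transpose_transpose, Matrix.mul_assoc]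
  rw [Matrix.trace_mul_comm]
  simp only [Matrix.mul_assoc]

namespace T3

variable {n1 n2 n3 l : ℕ}

lemma tInner_self_nonneg (A : T3 n1 n2 n3 ℝ) : 0 ≤ tInner A A :=
  Finset.sum_nonneg fun _ _ => Finset.sum_nonneg fun _ _ =>
    Finset.sum_nonneg fun _ _ => mul_self_nonneg _

lemma tInner_self_pos {A : T3 n1 n2 n3 ℝ} (hA : A ≠ 0) : 0 < tInner A A := by
  obtain ⟨i, j, k, hijk⟩ : ∃ i j k, A i j k ≠ 0 := by
    by_contra! h
    exact hA (funext fun i => funext fun j => funext (h i j))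
  have hsum : tInner A A = ∑ x : Fin n1 × Fin n2 × Fin n3, A x.1 x.2.1 x.2.2 ^ 2 := by
    simp only [tInner, Fintype.sum_prod_type, sq]
  rw [hsum]
  exact Finset.sum_pos' (fun _ _ => sq_nonneg _) ⟨(i, j, k), Finset.mem_univ _, by positivity⟩

lemma tNorm_div_tNorm_eq_one {A : T3 n1 n2 n3 ℝ} (hA : A ≠ 0) :
    tNorm (fun i j k => A i j k / tNorm A) = 1 := by
  have hsq : tNorm A ^ 2 = tInner A A := Real.sq_sqrt (tInner_self_nonneg A)
  have hscale : tInner (fun i j k => A i j k / tNorm A) (fun i j k => A i j k / tNorm A) =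
      tInner A A / tNorm A ^ 2 := by
    simp only [tInner, ← sq, div_pow, Finset.sum_div]
  rw [tNorm, hscale, hsq, div_self (tInner_self_pos hA).ne', Real.sqrt_one]

lemma tprod_tT_lat_lat (U : T3 n1 n2 n3 ℝ) (W : T3 n1 l n3 ℝ) (i : Fin n2) (j : Fin l) :
    tprod (tT (lat U i)) (lat W j) = tube (tprod (tT U) W) i j :=
  rfl

lemma tube_tI (i j : Fin n1) : tube (tI n1 n3) i j = if i = j then tI 1 n3 else 0 := by
  funext a b k
  split_ifs with h <;> simp [tube, tI, h, Subsingleton.elim a b]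

section Bcirc

variable [NeZero n3]

lemma bcirc_tprod (A : T3 n1 n2 n3 ℝ) (B : T3 n2 l n3 ℝ) :
    bcirc (tprod A B) = bcirc A * bcirc B := by
  ext p r
  simp only [bcirc, tprod, Matrix.mul_apply, Fintype.sum_prod_type]
  refine Fintype.sum_equiv (Equiv.addLeft r.1) _ _ fun q => ?_
  simp only [Equiv.coe_addLeft, sub_sub, add_sub_cancel_left]

lemma bcirc_tT (A : T3 n1 n2 n3 ℝ) : bcirc (tT A) = (bcirc A)ᵀ := by
  ext p q
  simp [bcirc, tT]

lemma bcirc_tI : bcirc (tI n1 n3) = 1 := by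
  ext p q
  simp [bcirc, tI, Matrix.one_apply, Prod.ext_iff, sub_eq_zero, Fin.ext_iff, and_comm]

lemma natCast_mul_tInner (A B : T3 n1 n2 n3 ℝ) :
    (n3 : ℝ) * tInner A B = ((bcirc A)ᵀ * bcirc B).trace := by
  have hshift : ∀ q : Fin n3, ∑ p : Fin n3 × Fin n1, ∑ j : Fin n2,
      A p.2 j (p.1 - q) * B p.2 j (p.1 - q) = tInner A B := by
    intro q
    rw [Fintype.sum_prod_type, Finset.sum_comm]
    refine Finset.sum_congr rfl fun i _ => ?_
    rw [Finset.sum_comm]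
    exact Finset.sum_congr rfl fun j _ => Fintype.sum_equiv (Equiv.subRight q) _ _ fun _ => rfl
  calc (n3 : ℝ) * tInner A B
      = ∑ q : Fin n3, ∑ p : Fin n3 × Fin n1, ∑ j : Fin n2,
          A p.2 j (p.1 - q) * B p.2 j (p.1 - q) := by simp [hshift]
    _ = ((bcirc A)ᵀ * bcirc B).trace := by
      simp only [Matrix.trace, Matrix.diag, Matrix.mul_apply, Matrix.transpose_apply, bcirc,
        Fintype.sum_prod_type (f := fun x : Fin n3 × Fin n2 => _)]
      exact Finset.sum_congr rfl fun q _ => Finset.sum_comm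

lemma PartOrth.transpose_bcirc_lat_mul_bcirc_lat {U : T3 n1 n2 n3 ℝ} (hU : PartOrth U)
    (i j : Fin n2) : (bcirc (lat U i))ᵀ * bcirc (lat U j) = if i = j then 1 else 0 := by
  rw [← bcirc_tT, ← bcirc_tprod, tprod_tT_lat_lat, hU, tube_tI]
  split_ifs
  · exact bcirc_tI
  · rfl

end Bcirc

lemma tInner_tprod_lat_tprod_tT_lat {q1 q2 : ℕ} {U : T3 n1 q1 n3 ℝ} {V : T3 n2 q2 n3 ℝ}
    (hU : PartOrth U) (hV : PartOrth V) (f g : T3 1 1 n3 ℝ) (i j : Fin q1) (i' j' : Fin q2) :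
    tInner (tprod (tprod (lat U i) f) (tT (lat V i')))
        (tprod (tprod (lat U j) g) (tT (lat V j'))) =
      if i = j ∧ i' = j' then tInner f g else 0 := by
  rcases n3.eq_zero_or_pos with rfl | hn3
  · simp [tInner]
  have := NeZero.of_pos hn3
  refine mul_left_cancel₀ (Nat.cast_ne_zero.mpr hn3.ne' : (n3 : ℝ) ≠ 0) ?_
  rw [natCast_mul_tInner, mul_ite, mul_zero, natCast_mul_tInner]
  simp only [bcirc_tprod, bcirc_tT]
  rw [Matrix.trace_transpose_mul_sandwich, hU.transpose_bcirc_lat_mul_bcirc_lat,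
    hV.transpose_bcirc_lat_mul_bcirc_lat]
  by_cases hij : i = j <;> by_cases hij' : i' = j' <;> simp [hij, hij', eq_comm]

lemma tNorm_tprod_lat_tprod_tT_lat {q1 q2 : ℕ} {U : T3 n1 q1 n3 ℝ} {V : T3 n2 q2 n3 ℝ}
    (hU : PartOrth U) (hV : PartOrth V) (f : T3 1 1 n3 ℝ) (i : Fin q1) (i' : Fin q2) :
    tNorm (tprod (tprod (lat U i) f) (tT (lat V i'))) = tNorm f := by
  rw [tNorm, tInner_tprod_lat_tprod_tT_lat hU hV, if_pos ⟨rfl, rfl⟩, tNorm]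

end T3

/-- the rank-one terms `T_i = U(:,i,:) * S(i,i,:) * V(:,i,:)ᵀ` of a t-SVD
are pairwise Frobenius-orthogonal, `‖T_i‖_F = ‖S(i,i,:)‖_F`, and whenever `S(i,i,:) ≠ 0`
the normalized tensor has Frobenius norm one. -/
theorem stmt_6 (n1 n2 n3 : ℕ) (A : T3 n1 n2 n3 ℝ) (U : T3 n1 n1 n3 ℝ)
    (S : T3 n1 n2 n3 ℝ) (V : T3 n2 n2 n3 ℝ) (h : IsTSVD A U S V) :
    (∀ i j : Fin (min n1 n2), i ≠ j →
      tInner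
        (rankOne U S V (Fin.castLE (Nat.min_le_left n1 n2) i)
          (Fin.castLE (Nat.min_le_right n1 n2) i))
        (rankOne U S V (Fin.castLE (Nat.min_le_left n1 n2) j)
          (Fin.castLE (Nat.min_le_right n1 n2) j)) = 0) ∧
    (∀ i : Fin (min n1 n2),
      tNorm
        (rankOne U S V (Fin.castLE (Nat.min_le_left n1 n2) i)
          (Fin.castLE (Nat.min_le_right n1 n2) i)) =
      tNorm (tube S (Fin.castLE (Nat.min_le_left n1 n2) i)
          (Fin.castLE (Nat.min_le_right n1 n2) i))) ∧
    (∀ i : Fin (min n1 n2),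
      tube S (Fin.castLE (Nat.min_le_left n1 n2) i)
          (Fin.castLE (Nat.min_le_right n1 n2) i) ≠ 0 →
      tNorm
        (tprod
          (tprod (lat U (Fin.castLE (Nat.min_le_left n1 n2) i))
            (fun _ _ k => S (Fin.castLE (Nat.min_le_left n1 n2) i)
                (Fin.castLE (Nat.min_le_right n1 n2) i) k /
              tNorm (tube S (Fin.castLE (Nat.min_le_left n1 n2) i)
                (Fin.castLE (Nat.min_le_right n1 n2) i))))
          (tT (lat V (Fin.castLE (Nat.min_le_right n1 n2) i)))) = 1) := by
  obtain ⟨⟨hU, -⟩, ⟨hV, -⟩, -, -⟩ := h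
  refine ⟨fun i j hij => ?_, fun i => tNorm_tprod_lat_tprod_tT_lat hU hV _ _ _,
    fun i hS => (tNorm_tprod_lat_tprod_tT_lat hU hV _ _ _).trans (tNorm_div_tNorm_eq_one hS)⟩
  rw [rankOne, rankOne, tInner_tprod_lat_tprod_tT_lat hU hV, if_neg]
  exact fun hij' => hij (Fin.castLE_injective _ hij'.1)
end
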